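/- For any real parameters α1, α2, the 8-dimensional algebra L(α1,α2) with basis {J,P1,P2,T,X1,X2,X3,X4} and multiplication [J,P1]=P2, [P1,J]=-P2, [J,P2]=-P1, [P2,J]=P1, [P1,P2]=T, [P2,P1]=-T, [J,J]=α1 X4, [P1,P1]=α2 X1, [P2,P2]=α2 X1, [J,T]=2α2 X1, [P1,T]=-2α2 X3, [T,P1]=3α2 X3, [P2,T]=2α2 X2, [T,P2]=-3α2 X2, [X1,P1]=X2, [X1,P2]=X3, [X1,T]=2X4, [X2,J]=-X3, [X2,P2]=X4, [X3,J]=X2, [X3,P1]=-X4 (all other products zero) is a Leibniz algebra. -/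
import Mathlib


/-- Bracket of the 8-dimensional real algebra `L(α₁,α₂)` in the basis
`{J, P1, P2, T, X1, X2, X3, X4}` (coordinates indexed `0,…,7`), with nonzero products
`[J,P1]=P2`, `[P1,J]=-P2`, `[J,P2]=-P1`, `[P2,J]=P1`, `[P1,P2]=T`, `[P2,P1]=-T`,
`[J,J]=α₁X4`, `[P1,P1]=α₂X1`, `[P2,P2]=α₂X1`, `[J,T]=2α₂X1`, `[P1,T]=-2α₂X3`,
`[T,P1]=3α₂X3`, `[P2,T]=2α₂X2`, `[T,P2]=-3α₂X2`, `[X1,P1]=X2`, `[X1,P2]=X3`,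
`[X1,T]=2X4`, `[X2,J]=-X3`, `[X2,P2]=X4`, `[X3,J]=X2`, `[X3,P1]=-X4`. -/
def bracketL (α₁ α₂ : ℝ) (u v : Fin 8 → ℝ) : Fin 8 → ℝ :=
  ![0,
    -(u 0 * v 2 - u 2 * v 0),
    u 0 * v 1 - u 1 * v 0,
    u 1 * v 2 - u 2 * v 1,
    α₂ * (u 1 * v 1) + α₂ * (u 2 * v 2) + 2 * α₂ * (u 0 * v 3),
    2 * α₂ * (u 2 * v 3) - 3 * α₂ * (u 3 * v 2) + u 4 * v 1 + u 6 * v 0,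
    -2 * α₂ * (u 1 * v 3) + 3 * α₂ * (u 3 * v 1) + u 4 * v 2 - u 5 * v 0,
    α₁ * (u 0 * v 0) + 2 * (u 4 * v 3) + u 5 * v 2 - u 6 * v 1]

lemma bL0 (α₁ α₂ : ℝ) (u v : Fin 8 → ℝ) : bracketL α₁ α₂ u v 0 = 0 := rfl
lemma bL1 (α₁ α₂ : ℝ) (u v : Fin 8 → ℝ) : bracketL α₁ α₂ u v 1 = -(u 0 * v 2 - u 2 * v 0) := rfl
lemma bL2 (α₁ α₂ : ℝ) (u v : Fin 8 → ℝ) : bracketL α₁ α₂ u v 2 = u 0 * v 1 - u 1 * v 0 := rfl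
lemma bL3 (α₁ α₂ : ℝ) (u v : Fin 8 → ℝ) : bracketL α₁ α₂ u v 3 = u 1 * v 2 - u 2 * v 1 := rfl
lemma bL4 (α₁ α₂ : ℝ) (u v : Fin 8 → ℝ) : bracketL α₁ α₂ u v 4 = α₂ * (u 1 * v 1) + α₂ * (u 2 * v 2) + 2 * α₂ * (u 0 * v 3) := rfl
lemma bL5 (α₁ α₂ : ℝ) (u v : Fin 8 → ℝ) : bracketL α₁ α₂ u v 5 = 2 * α₂ * (u 2 * v 3) - 3 * α₂ * (u 3 * v 2) + u 4 * v 1 + u 6 * v 0 := rfl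
lemma bL6 (α₁ α₂ : ℝ) (u v : Fin 8 → ℝ) : bracketL α₁ α₂ u v 6 = -2 * α₂ * (u 1 * v 3) + 3 * α₂ * (u 3 * v 1) + u 4 * v 2 - u 5 * v 0 := rfl
lemma bL7 (α₁ α₂ : ℝ) (u v : Fin 8 → ℝ) : bracketL α₁ α₂ u v 7 = α₁ * (u 0 * v 0) + 2 * (u 4 * v 3) + u 5 * v 2 - u 6 * v 1 := rfl

/-- For all real `α₁, α₂`, `L(α₁,α₂)` is a Leibniz algebra. -/
theorem bracketL_is_leibniz (α₁ α₂ : ℝ) :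
    ∀ x y z : Fin 8 → ℝ,
      bracketL α₁ α₂ x (bracketL α₁ α₂ y z)
        = bracketL α₁ α₂ (bracketL α₁ α₂ x y) z - bracketL α₁ α₂ (bracketL α₁ α₂ x z) y := by
  intro x y z
  funext i
  match i with
  | 0 => simp only [Pi.sub_apply, bL0, bL1, bL2, bL3, bL4, bL5, bL6, bL7]; ring
  | 1 => simp only [Pi.sub_apply, bL0, bL1, bL2, bL3, bL4, bL5, bL6, bL7]; ring
  | 2 => simp only [Pi.sub_apply, bL0, bL1, bL2, bL3, bL4, bL5, bL6, bL7]; ring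
  | 3 => simp only [Pi.sub_apply, bL0, bL1, bL2, bL3, bL4, bL5, bL6, bL7]; ring
  | 4 => simp only [Pi.sub_apply, bL0, bL1, bL2, bL3, bL4, bL5, bL6, bL7]; ring
  | 5 => simp only [Pi.sub_apply, bL0, bL1, bL2, bL3, bL4, bL5, bL6, bL7]; ring
  | 6 => simp only [Pi.sub_apply, bL0, bL1, bL2, bL3, bL4, bL5, bL6, bL7]; ring
  | 7 => simp only [Pi.sub_apply, bL0, bL1, bL2, bL3, bL4, bL5, bL6, bL7]; ring
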